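/- arXiv:0810.5276 — 3 statements merged into one kernel-verified Lean document; each statement's English description precedes it below -/
import Mathlib

section
/- For every real a > 0 and every real c, the function t ↦ Φ(−(a·t + c)) − 1{t < 0} is Lebesgue integrable on ℝ and ∫_{−∞}^{∞} [Φ(−(a·t + c)) − 1{t < 0}] dt = −c/a, where Φ is the standard normal cumulative distribution function and 1{t < 0} is the indicator of the set of negative reals. -/
open MeasureTheory

/-- The standard normal cumulative distribution function
`Φ(x) = ∫_{−∞}^x (2π)^{−1/2} e^{−u²/2} du`. -/
noncomputable def stdNormalCDF (x : ℝ) : ℝ :=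
  ∫ u in Set.Iic x, Real.exp (-u ^ 2 / 2) / Real.sqrt (2 * Real.pi)

/-!
With `U` a random variable of law `μ`, `Φ(-(a t + c)) - 1{t < 0}` is the expectation of
`1{U ≤ -(a t + c)} - 1{t < 0} = 1{t ≤ (-c - U) / a} - 1{t < 0}`. For fixed `U = u` this is, as a
function of `t`, the signed indicator of the interval between `0` and `(-c - u) / a`, whose
integral is `(-c - u) / a` and whose `L¹` norm is `|c + u| / a`. The latter is `μ`-integrable as
soon as `μ` has a first moment, so Fubini applies and the integral is `-(c + 𝔼 U) / a`, which is
`-c / a` for the standard normal law.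
-/

open Set ProbabilityTheory

lemma integrable_indicator_one {X : Type*} [MeasurableSpace X] {μ : Measure X} {s : Set X}
    (hs : MeasurableSet s) (hμs : μ s ≠ ⊤) : Integrable (s.indicator (1 : X → ℝ)) μ :=
  (integrableOn_const hμs).integrable_indicator hs

lemma indicator_Iic_sub_indicator_Iio_eq (x t : ℝ) :
    (Iic x).indicator (1 : ℝ → ℝ) t - (Iio 0).indicator 1 t =
      (Icc 0 x).indicator 1 t - (Ioo x 0).indicator 1 t := by
  simp only [indicator_apply, mem_Iic, mem_Iio, mem_Icc, mem_Ioo]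
  split_ifs <;> simp_all <;> linarith

lemma norm_indicator_Iic_sub_indicator_Iio_eq (x t : ℝ) :
    ‖(Iic x).indicator (1 : ℝ → ℝ) t - (Iio 0).indicator 1 t‖ =
      (Icc 0 x).indicator 1 t + (Ioo x 0).indicator 1 t := by
  simp only [indicator_apply, mem_Iic, mem_Iio, mem_Icc, mem_Ioo]
  split_ifs <;> simp_all <;> linarith

lemma integrable_indicator_Iic_sub_indicator_Iio (x : ℝ) :
    Integrable fun t => (Iic x).indicator (1 : ℝ → ℝ) t - (Iio 0).indicator 1 t := by
  simp only [indicator_Iic_sub_indicator_Iio_eq]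
  exact (integrable_indicator_one measurableSet_Icc measure_Icc_lt_top.ne).sub
    (integrable_indicator_one measurableSet_Ioo measure_Ioo_lt_top.ne)

lemma integral_indicator_Iic_sub_indicator_Iio (x : ℝ) :
    ∫ t, ((Iic x).indicator (1 : ℝ → ℝ) t - (Iio 0).indicator 1 t) = x := by
  simp only [indicator_Iic_sub_indicator_Iio_eq]
  rw [integral_sub (integrable_indicator_one measurableSet_Icc measure_Icc_lt_top.ne)
      (integrable_indicator_one measurableSet_Ioo measure_Ioo_lt_top.ne),
    integral_indicator_one measurableSet_Icc, integral_indicator_one measurableSet_Ioo,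
    Real.volume_real_Icc, Real.volume_real_Ioo, sub_zero, zero_sub,
    max_zero_sub_max_neg_zero_eq_self]

lemma integral_norm_indicator_Iic_sub_indicator_Iio (x : ℝ) :
    ∫ t, ‖(Iic x).indicator (1 : ℝ → ℝ) t - (Iio 0).indicator 1 t‖ = |x| := by
  simp only [norm_indicator_Iic_sub_indicator_Iio_eq]
  rw [integral_add (integrable_indicator_one measurableSet_Icc measure_Icc_lt_top.ne)
      (integrable_indicator_one measurableSet_Ioo measure_Ioo_lt_top.ne),
    integral_indicator_one measurableSet_Icc, integral_indicator_one measurableSet_Ioo,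
    Real.volume_real_Icc, Real.volume_real_Ioo, sub_zero, zero_sub,
    max_zero_add_max_neg_zero_eq_abs_self]

lemma indicator_Iic_neg_affine {a : ℝ} (ha : 0 < a) (c u t : ℝ) :
    (Iic (-(a * t + c))).indicator (1 : ℝ → ℝ) u = (Iic ((-c - u) / a)).indicator 1 t := by
  have hiff : u ≤ -(a * t + c) ↔ t ≤ (-c - u) / a := by
    rw [le_div_iff₀ ha]
    constructor <;> intro h <;> linarith
  simp only [indicator_apply, mem_Iic, hiff, Pi.one_apply]

noncomputable def boundaryLayerKernel (a c : ℝ) (p : ℝ × ℝ) : ℝ :=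
  (Iic (-(a * p.2 + c))).indicator 1 p.1 - (Iio 0).indicator 1 p.2

section BoundaryLayerKernel

variable {a : ℝ} (c : ℝ)

lemma measurable_boundaryLayerKernel : Measurable (boundaryLayerKernel a c) :=
  (measurable_one.indicator (measurableSet_le (f := fun p : ℝ × ℝ => p.1) measurable_fst
    (by fun_prop : Measurable fun p : ℝ × ℝ => -(a * p.2 + c)))).sub
    ((measurable_one.indicator measurableSet_Iio).comp measurable_snd)

lemma integral_boundaryLayerKernel_left (μ : Measure ℝ) [IsProbabilityMeasure μ] (t : ℝ) :
    ∫ u, boundaryLayerKernel a c (u, t) ∂μ = cdf μ (-(a * t + c)) - if t < 0 then 1 else 0 := by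
  simp only [boundaryLayerKernel]
  rw [integral_sub ((integrable_const 1).indicator measurableSet_Iic) (integrable_const _),
    integral_indicator_one measurableSet_Iic, integral_const, cdf_eq_real]
  simp [indicator_apply]

lemma integral_boundaryLayerKernel_right (ha : 0 < a) (u : ℝ) :
    ∫ t, boundaryLayerKernel a c (u, t) = (-c - u) / a := by
  simp only [boundaryLayerKernel, indicator_Iic_neg_affine ha]
  exact integral_indicator_Iic_sub_indicator_Iio _

lemma integrable_boundaryLayerKernel (ha : 0 < a) (μ : Measure ℝ) [IsProbabilityMeasure μ]
    (hμ : Integrable (fun x => x) μ) : Integrable (boundaryLayerKernel a c) (μ.prod volume) := by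
  refine (integrable_prod_iff (measurable_boundaryLayerKernel c).aestronglyMeasurable).2
    ⟨ae_of_all _ fun u => ?_, ?_⟩
  · simp only [boundaryLayerKernel, indicator_Iic_neg_affine ha]
    exact integrable_indicator_Iic_sub_indicator_Iio _
  · simp only [boundaryLayerKernel, indicator_Iic_neg_affine ha,
      integral_norm_indicator_Iic_sub_indicator_Iio]
    exact (((integrable_const (-c)).sub hμ).div_const a).abs

end BoundaryLayerKernel

theorem integrable_cdf_neg_affine_sub_indicator_and_integral_eq (μ : Measure ℝ)
    [IsProbabilityMeasure μ] (hμ : Integrable (fun x => x) μ) {a : ℝ} (ha : 0 < a) (c : ℝ) :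
    Integrable (fun t => cdf μ (-(a * t + c)) - if t < 0 then 1 else 0) ∧
      ∫ t, (cdf μ (-(a * t + c)) - if t < 0 then 1 else 0) = -(c + ∫ x, x ∂μ) / a := by
  have hK := integrable_boundaryLayerKernel c ha μ hμ
  simp only [← integral_boundaryLayerKernel_left c μ]
  refine ⟨hK.integral_prod_right, ?_⟩
  rw [← integral_integral_swap (f := fun u t => boundaryLayerKernel a c (u, t)) hK]
  simp only [integral_boundaryLayerKernel_right c ha]
  rw [integral_div, integral_sub (integrable_const _) hμ, integral_const, probReal_univ]
  ring

lemma stdNormalCDF_eq_cdf_gaussianReal (x : ℝ) : stdNormalCDF x = cdf (gaussianReal 0 1) x := by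
  rw [cdf_eq_real, measureReal_def, gaussianReal_apply_eq_integral _ one_ne_zero,
    ENNReal.toReal_ofReal
      (setIntegral_nonneg measurableSet_Iic fun u _ => gaussianPDFReal_nonneg _ _ u)]
  simp [stdNormalCDF, gaussianPDFReal, div_eq_inv_mul]

/-- For `a > 0` and `c ∈ ℝ`, the function
`t ↦ Φ(−(a·t + c)) − 1{t < 0}` is Lebesgue integrable on `ℝ` and
`∫ (Φ(−(a·t + c)) − 1{t < 0}) dt = −c/a`. -/
theorem integral_Phi_boundary_layer (a c : ℝ) (ha : 0 < a) :
    Integrable (fun t : ℝ => stdNormalCDF (-(a * t + c)) - if t < 0 then 1 else 0) ∧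
    (∫ t : ℝ, (stdNormalCDF (-(a * t + c)) - if t < 0 then 1 else 0)) = -c / a := by
  have h := integrable_cdf_neg_affine_sub_indicator_and_integral_eq (gaussianReal 0 1)
    (memLp_one_iff_integrable.1 (memLp_id_gaussianReal 1)) ha c
  rw [integral_id_gaussianReal, add_zero] at h
  simpa only [stdNormalCDF_eq_cdf_gaussianReal] using h
end

section
/- For every real a > 0 and every real c, the function t ↦ t·[Φ(−(a·t + c)) − 1{t < 0}] is Lebesgue integrable on ℝ and ∫_{−∞}^{∞} t·[Φ(−(a·t + c)) − 1{t < 0}] dt = (1 + c²)/(2a²), where Φ is the standard normal cumulative distribution function and 1{t < 0} is the indicator of the set of negative reals. -/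
open MeasureTheory

namespace BLaux

open Set Real

noncomputable def phi (u : ℝ) : ℝ := Real.exp (-u ^ 2 / 2) / Real.sqrt (2 * Real.pi)

lemma phi_eq (u : ℝ) : phi u = (Real.sqrt (2 * Real.pi))⁻¹ * Real.exp (-(1/2) * u ^ 2) := by
  unfold phi
  rw [div_eq_inv_mul]
  congr 1
  ring_nf

lemma phi_nonneg (u : ℝ) : 0 ≤ phi u :=
  div_nonneg (Real.exp_pos _).le (Real.sqrt_nonneg _)

lemma continuous_phi : Continuous phi := by
  unfold phi
  fun_prop

lemma sqrt_two_pi_pos : 0 < Real.sqrt (2 * Real.pi) :=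
  Real.sqrt_pos.mpr (by positivity)

lemma integrable_phi : Integrable phi := by
  have h := (integrable_exp_neg_mul_sq (by norm_num : (0:ℝ) < 1/2)).const_mul
    (Real.sqrt (2 * Real.pi))⁻¹
  exact h.congr (Filter.Eventually.of_forall fun u => (phi_eq u).symm)

lemma integral_phi : ∫ u, phi u = 1 := by
  simp_rw [phi_eq]
  rw [integral_const_mul, integral_gaussian]
  rw [show Real.pi / (1/2) = 2 * Real.pi by ring]
  exact inv_mul_cancel₀ sqrt_two_pi_pos.ne'

lemma integrable_id_mul_phi : Integrable (fun u : ℝ => u * phi u) := by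
  have h := (integrable_mul_exp_neg_mul_sq (by norm_num : (0:ℝ) < 1/2)).const_mul
    (Real.sqrt (2 * Real.pi))⁻¹
  exact h.congr (Filter.Eventually.of_forall fun u => by simp only [phi_eq]; ring)

lemma phi_neg (u : ℝ) : phi (-u) = phi u := by
  unfold phi; rw [neg_pow]; norm_num

lemma integral_id_mul_phi : ∫ u, u * phi u = 0 := by
  have h : ∫ u : ℝ, (-u) * phi (-u) = ∫ u : ℝ, u * phi u :=
    integral_neg_eq_self (fun u : ℝ => u * phi u) volume
  have h2 : ∀ u : ℝ, (-u) * phi (-u) = -(u * phi u) := by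
    intro u; rw [phi_neg]; ring
  simp_rw [h2, integral_neg] at h
  linarith

lemma integrable_sq_mul_phi : Integrable (fun u : ℝ => u ^ 2 * phi u) := by
  have h := (integrable_rpow_mul_exp_neg_mul_sq (by norm_num : (0:ℝ) < 1/2)
    (by norm_num : (-1:ℝ) < 2)).const_mul (Real.sqrt (2 * Real.pi))⁻¹
  refine h.congr (Filter.Eventually.of_forall fun u => ?_)
  have hr : (u : ℝ) ^ (2:ℝ) = u ^ 2 := by
    rw [show (2:ℝ) = ((2:ℕ):ℝ) by norm_num, Real.rpow_natCast]
  show (Real.sqrt (2 * Real.pi))⁻¹ * (u ^ (2:ℝ) * Real.exp (-(1/2) * u ^ 2)) = u ^ 2 * phi u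
  rw [hr, phi_eq]
  ring

lemma Gamma_three_halves : Real.Gamma (3/2) = Real.sqrt Real.pi / 2 := by
  have h := Real.Gamma_add_one (by norm_num : (1/2 : ℝ) ≠ 0)
  rw [show (1/2 : ℝ) + 1 = 3/2 by norm_num] at h
  rw [h, Real.Gamma_one_half_eq]
  ring

lemma integral_sq_exp_Ioi :
    ∫ x in Ioi (0:ℝ), x ^ 2 * Real.exp (-(1/2) * x ^ 2) = Real.sqrt (2 * Real.pi) / 2 := by
  have h := integral_rpow_mul_exp_neg_mul_rpow (p := 2) (q := 2) (b := 1/2)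
    (by norm_num) (by norm_num) (by norm_num)
  have heq : ∀ x : ℝ, x ^ (2:ℝ) * Real.exp (-(1/2) * x ^ (2:ℝ))
      = x ^ 2 * Real.exp (-(1/2) * x ^ 2) := by
    intro x
    have hr : (x : ℝ) ^ (2:ℝ) = x ^ 2 := by
      rw [show (2:ℝ) = ((2:ℕ):ℝ) by norm_num, Real.rpow_natCast]
    rw [hr]
  rw [show (∫ x in Ioi (0:ℝ), x ^ (2:ℝ) * Real.exp (-(1/2) * x ^ (2:ℝ)))
      = ∫ x in Ioi (0:ℝ), x ^ 2 * Real.exp (-(1/2) * x ^ 2) from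
    setIntegral_congr_fun measurableSet_Ioi (fun x _ => heq x)] at h
  rw [h, show (-(2+1)/2 : ℝ) = -(3/2) by norm_num,
    show ((2+1)/2 : ℝ) = 3/2 by norm_num, Gamma_three_halves]
  have h2 : ((1:ℝ)/2) ^ (-(3/2) : ℝ) = Real.sqrt 8 := by
    have e1 : ((1:ℝ)/2) ^ (-(3/2) : ℝ) = (2:ℝ) ^ ((3:ℝ)/2) := by
      rw [one_div, Real.inv_rpow (by norm_num), Real.rpow_neg (by norm_num), inv_inv]
    rw [e1, show ((3:ℝ)/2) = ((3:ℕ):ℝ) * ((1:ℝ)/2) by push_cast; ring,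
      Real.rpow_mul (by norm_num), Real.rpow_natCast, ← Real.sqrt_eq_rpow]
    norm_num
  rw [h2]
  have key : Real.sqrt 8 * Real.sqrt Real.pi = 2 * Real.sqrt (2 * Real.pi) := by
    rw [← Real.sqrt_mul (by norm_num), show (8:ℝ) * Real.pi = 2^2 * (2 * Real.pi) by ring,
      Real.sqrt_mul (by positivity), Real.sqrt_sq (by norm_num)]
  linear_combination key / 4

lemma phi_abs (x : ℝ) : phi |x| = phi x := by
  unfold phi; rw [sq_abs]

lemma integral_sq_mul_phi : ∫ u, u ^ 2 * phi u = 1 := by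
  have h0 := integral_comp_abs (f := fun x : ℝ => x ^ 2 * phi x)
  simp only [sq_abs, phi_abs] at h0
  rw [h0]
  have h1 : ∫ x in Ioi (0:ℝ), x ^ 2 * phi x
      = (Real.sqrt (2 * Real.pi))⁻¹ * (Real.sqrt (2 * Real.pi) / 2) := by
    calc ∫ x in Ioi (0:ℝ), x ^ 2 * phi x
        = ∫ x in Ioi (0:ℝ), (Real.sqrt (2 * Real.pi))⁻¹ * (x ^ 2 * Real.exp (-(1/2) * x ^ 2)) :=
          setIntegral_congr_fun measurableSet_Ioi (fun x _ => by rw [phi_eq]; ring)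
      _ = (Real.sqrt (2 * Real.pi))⁻¹ * ∫ x in Ioi (0:ℝ), x ^ 2 * Real.exp (-(1/2) * x ^ 2) :=
          integral_const_mul _ _
      _ = _ := by rw [integral_sq_exp_Ioi]
  rw [h1]
  field_simp

section main

variable (a c : ℝ)

/-- The region of `(t,u)`-space carrying the mass. -/
def S : Set (ℝ × ℝ) :=
  {p | (0 ≤ p.1 ∧ p.2 ≤ -(a * p.1 + c)) ∨ (p.1 < 0 ∧ -(a * p.1 + c) < p.2)}

/-- The nonnegative integrand on the product space (curried). -/
noncomputable def g (t u : ℝ) : ℝ :=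
  Set.indicator (S a c) (fun p => |p.1| * phi p.2) (t, u)

lemma measurableSet_S : MeasurableSet (S a c) := by
  have h1 : Measurable fun p : ℝ × ℝ => -(a * p.1 + c) := by fun_prop
  exact ((measurableSet_le measurable_const measurable_fst).inter
      (measurableSet_le measurable_snd h1)).union
    ((measurableSet_lt measurable_fst measurable_const).inter
      (measurableSet_lt h1 measurable_snd))

lemma measurable_g : Measurable (Function.uncurry (g a c)) := by
  have : Function.uncurry (g a c)
      = Set.indicator (S a c) (fun p : ℝ × ℝ => |p.1| * phi p.2) := rfl
  rw [this]
  exact (measurable_fst.abs.mul (continuous_phi.measurable.comp measurable_snd)).indicator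
    (measurableSet_S a c)

lemma g_nonneg (t u : ℝ) : 0 ≤ g a c t u :=
  Set.indicator_nonneg (fun p _ => mul_nonneg (abs_nonneg _) (phi_nonneg _)) _

lemma stdNormalCDF_eq (x : ℝ) : stdNormalCDF x = ∫ u in Iic x, phi u := rfl

/-- Slice in `u` for nonnegative `t`. -/
lemma g_slice_nonneg {t : ℝ} (ht : 0 ≤ t) (u : ℝ) :
    g a c t u = Set.indicator (Iic (-(a * t + c))) (fun u => t * phi u) u := by
  unfold g
  by_cases h : u ≤ -(a * t + c)
  · have hS : ((t, u) : ℝ × ℝ) ∈ S a c := Or.inl ⟨ht, h⟩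
    rw [Set.indicator_of_mem hS, Set.indicator_of_mem (Set.mem_Iic.mpr h)]
    show |t| * phi u = t * phi u
    rw [abs_of_nonneg ht]
  · have hS : ((t, u) : ℝ × ℝ) ∉ S a c := by
      rintro (⟨_, h2⟩ | ⟨h1, _⟩)
      · exact h h2
      · exact absurd ht (not_le.mpr h1)
    rw [Set.indicator_of_notMem hS,
      Set.indicator_of_notMem (fun hc => h (Set.mem_Iic.mp hc))]

/-- Slice in `u` for negative `t`. -/
lemma g_slice_neg {t : ℝ} (ht : t < 0) (u : ℝ) :
    g a c t u = Set.indicator (Ioi (-(a * t + c))) (fun u => (-t) * phi u) u := by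
  unfold g
  by_cases h : -(a * t + c) < u
  · have hS : ((t, u) : ℝ × ℝ) ∈ S a c := Or.inr ⟨ht, h⟩
    rw [Set.indicator_of_mem hS, Set.indicator_of_mem (Set.mem_Ioi.mpr h)]
    show |t| * phi u = -t * phi u
    rw [abs_of_neg ht]
  · have hS : ((t, u) : ℝ × ℝ) ∉ S a c := by
      rintro (⟨h1, _⟩ | ⟨_, h2⟩)
      · exact absurd h1 (not_le.mpr ht)
      · exact h h2
    rw [Set.indicator_of_notMem hS,
      Set.indicator_of_notMem (fun hc => h (Set.mem_Ioi.mp hc))]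

lemma key1 (t : ℝ) :
    ∫ u, g a c t u = t * (stdNormalCDF (-(a * t + c)) - if t < 0 then 1 else 0) := by
  by_cases ht : 0 ≤ t
  · simp_rw [g_slice_nonneg a c ht]
    rw [integral_indicator measurableSet_Iic, integral_const_mul, if_neg (not_lt.mpr ht),
      stdNormalCDF_eq, sub_zero]
  · push_neg at ht
    simp_rw [g_slice_neg a c ht]
    rw [integral_indicator measurableSet_Ioi, integral_const_mul, if_pos ht]
    have hsplit := intervalIntegral.integral_Iic_add_Ioi (b := -(a * t + c))
      integrable_phi.integrableOn integrable_phi.integrableOn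
    rw [integral_phi] at hsplit
    rw [stdNormalCDF_eq]
    have : ∫ u in Ioi (-(a * t + c)), phi u = 1 - ∫ u in Iic (-(a * t + c)), phi u := by
      linarith
    rw [this]; ring

variable {a} in
lemma mem_iff (ha : 0 < a) (t u : ℝ) :
    u ≤ -(a * t + c) ↔ t ≤ -(u + c) / a := by
  rw [le_div_iff₀ ha]
  constructor <;> intro h <;> nlinarith

variable {a} in
lemma key2 (ha : 0 < a) (u : ℝ) :
    ∫ t, g a c t u = phi u * ((u + c) ^ 2 / (2 * a ^ 2)) := by
  set s : ℝ := -(u + c) / a with hs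
  have hmem : ∀ t, ((t, u) ∈ S a c) ↔ ((0 ≤ t ∧ t ≤ s) ∨ (t < 0 ∧ s < t)) := by
    intro t
    have hiff : u ≤ -(a * t + c) ↔ t ≤ s := mem_iff c ha t u
    have hiff' : -(a * t + c) < u ↔ s < t := by
      rw [← not_le, hiff, not_le]
    unfold S
    simp only [Set.mem_setOf_eq]
    rw [hiff, hiff']
  have hs2 : s ^ 2 = (u + c) ^ 2 / a ^ 2 := by
    rw [hs, div_pow, neg_pow]; norm_num
  by_cases hsn : 0 ≤ s
  · have hslice : ∀ t, g a c t u = Set.indicator (Icc 0 s) (fun t => t * phi u) t := by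
      intro t
      unfold g
      by_cases h : t ∈ Icc 0 s
      · rw [Set.indicator_of_mem, Set.indicator_of_mem h]
        · rw [abs_of_nonneg h.1]
        · exact (hmem t).mpr (Or.inl ⟨h.1, h.2⟩)
      · rw [Set.indicator_of_notMem, Set.indicator_of_notMem h]
        intro hc
        rcases (hmem t).mp hc with ⟨h1, h2⟩ | ⟨h1, h2⟩
        · exact h ⟨h1, h2⟩
        · exact absurd (h2.trans h1) (not_lt.mpr hsn)
    simp_rw [hslice]
    rw [integral_indicator measurableSet_Icc, integral_Icc_eq_integral_Ioc,
      ← intervalIntegral.integral_of_le hsn, intervalIntegral.integral_mul_const,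
      integral_id]
    rw [hs2]; ring
  · push_neg at hsn
    have hslice : ∀ t, g a c t u = Set.indicator (Ioo s 0) (fun t => (-t) * phi u) t := by
      intro t
      unfold g
      by_cases h : t ∈ Ioo s 0
      · rw [Set.indicator_of_mem, Set.indicator_of_mem h]
        · rw [abs_of_neg h.2]
        · exact (hmem t).mpr (Or.inr ⟨h.2, h.1⟩)
      · rw [Set.indicator_of_notMem, Set.indicator_of_notMem h]
        intro hc
        rcases (hmem t).mp hc with ⟨h1, h2⟩ | ⟨h1, h2⟩
        · exact absurd (h2.trans_lt hsn) (not_lt.mpr h1)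
        · exact h ⟨h2, h1⟩
    simp_rw [hslice]
    rw [integral_indicator measurableSet_Ioo, ← integral_Ioc_eq_integral_Ioo,
      ← intervalIntegral.integral_of_le hsn.le, intervalIntegral.integral_mul_const]
    have : ∫ t in s..(0:ℝ), -t = s ^ 2 / 2 := by
      rw [intervalIntegral.integral_neg, integral_id]
      ring
    rw [this, hs2]; ring

variable {a} in
lemma integrable_slice (ha : 0 < a) (u : ℝ) : Integrable (fun t => g a c t u) := by
  set s : ℝ := -(u + c) / a
  have hcont : Continuous fun t : ℝ => |t| * phi u := by fun_prop
  have hIcc : Integrable (Set.indicator (Icc (min s 0) (max s 0))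
      (fun t : ℝ => |t| * phi u)) :=
    (hcont.integrableOn_Icc).integrable_indicator measurableSet_Icc
  have hmeas : Measurable fun t : ℝ => g a c t u :=
    (measurable_g a c).comp (measurable_id.prodMk measurable_const)
  refine hIcc.mono' hmeas.aestronglyMeasurable ?_
  refine Filter.Eventually.of_forall fun t => ?_
  rw [Real.norm_of_nonneg (g_nonneg a c t u)]
  unfold g
  by_cases h : (t, u) ∈ S a c
  · rw [Set.indicator_of_mem h]
    have htmem : t ∈ Icc (min s 0) (max s 0) := by
      have h' : (0 ≤ t ∧ u ≤ -(a * t + c)) ∨ (t < 0 ∧ -(a * t + c) < u) := h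
      rcases h' with ⟨h1, h2⟩ | ⟨h1, h2⟩
      · have hts : t ≤ s := (mem_iff c ha t u).mp h2
        exact ⟨le_trans (min_le_right _ _) h1, le_trans hts (le_max_left _ _)⟩
      · have hst : s < t := by
          by_contra hc
          exact absurd ((mem_iff c ha t u).mpr (not_lt.mp hc)) (not_le.mpr h2)
        exact ⟨le_trans (min_le_left _ _) hst.le, le_trans h1.le (le_max_right _ _)⟩
    rw [Set.indicator_of_mem htmem]
  · rw [Set.indicator_of_notMem h]
    exact Set.indicator_nonneg (fun t _ => mul_nonneg (abs_nonneg _) (phi_nonneg _)) _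

lemma integrable_phi_weight : Integrable (fun u : ℝ => phi u * ((u + c) ^ 2 / (2 * a ^ 2))) := by
  have h : Integrable (fun u : ℝ =>
      (u ^ 2 * phi u + 2 * c * (u * phi u) + c ^ 2 * phi u) * (2 * a ^ 2)⁻¹) :=
    ((integrable_sq_mul_phi.add ((integrable_id_mul_phi).const_mul (2 * c))).add
      (integrable_phi.const_mul (c ^ 2))).mul_const _
  exact h.congr (Filter.Eventually.of_forall fun u => by ring)

lemma integral_phi_weight :
    ∫ u, phi u * ((u + c) ^ 2 / (2 * a ^ 2)) = (1 + c ^ 2) / (2 * a ^ 2) := by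
  have hrw : (fun u : ℝ => phi u * ((u + c) ^ 2 / (2 * a ^ 2)))
      = fun u : ℝ =>
        (u ^ 2 * phi u + 2 * c * (u * phi u) + c ^ 2 * phi u) * (2 * a ^ 2)⁻¹ := by
    funext u; ring
  rw [hrw, integral_mul_const, integral_add, integral_add, integral_const_mul,
    integral_const_mul, integral_sq_mul_phi, integral_id_mul_phi, integral_phi]
  · ring
  · exact integrable_sq_mul_phi
  · exact integrable_id_mul_phi.const_mul _
  · exact integrable_sq_mul_phi.add (integrable_id_mul_phi.const_mul _)
  · exact integrable_phi.const_mul _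

variable {a} in
lemma integrable_g_prod (ha : 0 < a) :
    Integrable (Function.uncurry (g a c)) (volume.prod volume) := by
  rw [integrable_prod_iff' (measurable_g a c).aestronglyMeasurable]
  constructor
  · exact Filter.Eventually.of_forall fun u => integrable_slice c ha u
  · have heq : (fun u : ℝ => ∫ t, ‖Function.uncurry (g a c) (t, u)‖)
        = fun u : ℝ => phi u * ((u + c) ^ 2 / (2 * a ^ 2)) := by
      funext u
      have hn : (fun t : ℝ => ‖Function.uncurry (g a c) (t, u)‖) = fun t => g a c t u :=
        funext fun t => Real.norm_of_nonneg (g_nonneg a c t u)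
      rw [hn, key2 c ha u]
    rw [heq]
    exact integrable_phi_weight a c

end main

end BLaux

/-- For `a > 0` and `c ∈ ℝ`, the function
`t ↦ t·(Φ(−(a·t + c)) − 1{t < 0})` is Lebesgue integrable on `ℝ` and
`∫ t·(Φ(−(a·t + c)) − 1{t < 0}) dt = (1 + c²)/(2a²)`. -/
theorem integral_t_mul_Phi_boundary_layer (a c : ℝ) (ha : 0 < a) :
    Integrable (fun t : ℝ => t * (stdNormalCDF (-(a * t + c)) - if t < 0 then 1 else 0)) ∧
    (∫ t : ℝ, t * (stdNormalCDF (-(a * t + c)) - if t < 0 then 1 else 0))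
      = (1 + c ^ 2) / (2 * a ^ 2) := by
  have hG := BLaux.integrable_g_prod c ha
  have hrw : (fun t : ℝ => t * (stdNormalCDF (-(a * t + c)) - if t < 0 then 1 else 0))
      = fun t : ℝ => ∫ u, BLaux.g a c t u :=
    funext fun t => (BLaux.key1 a c t).symm
  constructor
  · rw [hrw]
    exact hG.integral_prod_left
  · rw [hrw]
    rw [MeasureTheory.integral_integral_swap hG]
    rw [show (fun u : ℝ => ∫ t, BLaux.g a c t u)
        = fun u : ℝ => BLaux.phi u * ((u + c) ^ 2 / (2 * a ^ 2)) from
      funext fun u => BLaux.key2 c ha u]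
    exact BLaux.integral_phi_weight a c
end

section
/- For every real c, the function s ↦ s·[Φ(−2s) − 1{s < c}] is Lebesgue integrable on ℝ and ∫_{−∞}^{∞} s·[Φ(−2s) − 1{s < c}] ds = 1/8 − c²/2, where Φ is the standard normal cumulative distribution function and 1{s < c} is the indicator of the set {s : s < c}. -/
open MeasureTheory

/-!
With `U` standard normal and `X = -U/2`, `Φ(-2s) = P(X ≥ s)`. Splitting the indicator as
`1{s < c} = 1{s ≤ 0} + (1{s < c} - 1{s ≤ 0})`, the theorem is a layer-cake formula
`∫ s (P(X ≥ s) - 1{s ≤ 0}) ds = E[X²]/2 = 1/8` plus the elementary `∫_0^c s ds = c²/2`.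
The layer-cake formula follows from Tonelli, because the kernel
`s (1{s ≤ x} - 1{s ≤ 0}) = |s| 1{s between 0 and x}` is nonnegative with `ds`-integral `x²/2`.
-/

open ProbabilityTheory Set

noncomputable def layerKernel (x s : ℝ) : ℝ :=
  s * ((if s ≤ x then 1 else 0) - if s ≤ 0 then 1 else 0)

lemma layerKernel_nonneg (x s : ℝ) : 0 ≤ layerKernel x s := by
  unfold layerKernel
  split_ifs <;> nlinarith

lemma layerKernel_eq_indicator (x s : ℝ) :
    layerKernel x s =
      if 0 ≤ x then (Ioc 0 x).indicator id s else (Ioc x 0).indicator (fun s => -s) s := by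
  simp only [layerKernel, indicator_apply, mem_Ioc, id]
  split_ifs <;> grind

lemma integrable_layerKernel (x : ℝ) : Integrable (layerKernel x) := by
  simp_rw [funext (layerKernel_eq_indicator x)]
  split_ifs
  · exact continuous_id.integrableOn_Ioc.integrable_indicator measurableSet_Ioc
  · exact continuous_neg.integrableOn_Ioc.integrable_indicator measurableSet_Ioc

lemma integral_layerKernel (x : ℝ) : ∫ s, layerKernel x s = x ^ 2 / 2 := by
  simp_rw [layerKernel_eq_indicator]
  split_ifs with hx
  · rw [integral_indicator measurableSet_Ioc, ← intervalIntegral.integral_of_le hx]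
    simp
  · rw [integral_indicator measurableSet_Ioc, ← intervalIntegral.integral_of_le (by linarith),
      intervalIntegral.integral_neg, integral_id]
    ring

section LayerCake

variable {Ω : Type*} [MeasurableSpace Ω] {P : Measure Ω} [IsProbabilityMeasure P] {X : Ω → ℝ}

lemma integral_layerKernel_comp_eq_measureReal (hX : Measurable X) (s : ℝ) :
    ∫ ω, layerKernel (X ω) s ∂P = s * (P.real {ω | s ≤ X ω} - if s ≤ 0 then 1 else 0) := by
  have hmeas : MeasurableSet {ω | s ≤ X ω} := measurableSet_le measurable_const hX
  have hind : (fun ω => if s ≤ X ω then (1 : ℝ) else 0) = {ω | s ≤ X ω}.indicator 1 := by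
    ext ω; simp [indicator_apply]
  simp only [layerKernel]
  rw [integral_const_mul, integral_sub _ (integrable_const _), hind, integral_indicator_one hmeas]
  · simp
  · rw [hind]; exact (integrable_const 1).indicator hmeas

omit [IsProbabilityMeasure P] in
lemma integrable_layerKernel_prod (hX : Measurable X) (hX2 : Integrable (fun ω => X ω ^ 2) P) :
    Integrable (fun p : Ω × ℝ => layerKernel (X p.1) p.2) (P.prod volume) := by
  have hmeas : Measurable fun p : Ω × ℝ => layerKernel (X p.1) p.2 := by
    refine measurable_snd.mul (Measurable.sub ?_ ?_) <;>
      exact Measurable.ite (measurableSet_le measurable_snd (by fun_prop))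
        measurable_const measurable_const
  refine (integrable_prod_iff hmeas.aestronglyMeasurable).2
    ⟨ae_of_all _ fun ω => integrable_layerKernel (X ω), ?_⟩
  simp_rw [Real.norm_of_nonneg (layerKernel_nonneg _ _), integral_layerKernel]
  exact hX2.div_const 2

lemma integrable_mul_measureReal_le_sub_ite_le_zero (hX : Measurable X)
    (hX2 : Integrable (fun ω => X ω ^ 2) P) :
    Integrable fun s : ℝ => s * (P.real {ω | s ≤ X ω} - if s ≤ 0 then 1 else 0) :=
  (integrable_layerKernel_prod hX hX2).integral_prod_right.congr
    (ae_of_all _ (integral_layerKernel_comp_eq_measureReal hX))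

lemma integral_mul_measureReal_le_sub_ite_le_zero (hX : Measurable X)
    (hX2 : Integrable (fun ω => X ω ^ 2) P) :
    ∫ s : ℝ, s * (P.real {ω | s ≤ X ω} - if s ≤ 0 then 1 else 0) = (∫ ω, X ω ^ 2 ∂P) / 2 := by
  have hF := integrable_layerKernel_prod hX hX2
  calc ∫ s : ℝ, s * (P.real {ω | s ≤ X ω} - if s ≤ 0 then 1 else 0)
      = ∫ s : ℝ, ∫ ω, layerKernel (X ω) s ∂P := by
        simp_rw [integral_layerKernel_comp_eq_measureReal hX]
    _ = ∫ ω, (∫ s : ℝ, layerKernel (X ω) s) ∂P := by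
        rw [← integral_prod_symm _ hF, integral_prod _ hF]
    _ = (∫ ω, X ω ^ 2 ∂P) / 2 := by simp_rw [integral_layerKernel, integral_div]

omit [IsProbabilityMeasure P] in
lemma mul_measureReal_le_sub_ite_lt_ae_eq (c : ℝ) :
    (fun s : ℝ => s * (P.real {ω | s ≤ X ω} - if s < c then 1 else 0)) =ᵐ[volume]
      fun s => s * (P.real {ω | s ≤ X ω} - if s ≤ 0 then 1 else 0) - layerKernel c s := by
  filter_upwards [volume.ae_ne c] with s hs
  have hlt : s < c ↔ s ≤ c := ⟨le_of_lt, fun h => lt_of_le_of_ne h hs⟩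
  simp only [layerKernel, hlt]
  ring

lemma integrable_mul_measureReal_le_sub_ite_lt (hX : Measurable X)
    (hX2 : Integrable (fun ω => X ω ^ 2) P) (c : ℝ) :
    Integrable fun s : ℝ => s * (P.real {ω | s ≤ X ω} - if s < c then 1 else 0) :=
  ((integrable_mul_measureReal_le_sub_ite_le_zero hX hX2).sub (integrable_layerKernel c)).congr
    (mul_measureReal_le_sub_ite_lt_ae_eq c).symm

lemma integral_mul_measureReal_le_sub_ite_lt (hX : Measurable X)
    (hX2 : Integrable (fun ω => X ω ^ 2) P) (c : ℝ) :
    ∫ s : ℝ, s * (P.real {ω | s ≤ X ω} - if s < c then 1 else 0) =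
      ((∫ ω, X ω ^ 2 ∂P) - c ^ 2) / 2 := by
  rw [integral_congr_ae (mul_measureReal_le_sub_ite_lt_ae_eq c),
    integral_sub (integrable_mul_measureReal_le_sub_ite_le_zero hX hX2) (integrable_layerKernel c),
    integral_mul_measureReal_le_sub_ite_le_zero hX hX2, integral_layerKernel]
  ring

end LayerCake

lemma stdNormalCDF_eq_measureReal_gaussianReal (x : ℝ) :
    stdNormalCDF x = (gaussianReal 0 1).real (Iic x) := by
  rw [measureReal_def, gaussianReal_apply_eq_integral _ one_ne_zero, ENNReal.toReal_ofReal
    (setIntegral_nonneg measurableSet_Iic fun u _ => gaussianPDFReal_nonneg _ _ u)]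
  simp [stdNormalCDF, gaussianPDFReal_def, div_eq_inv_mul]

lemma integral_sub_sq_gaussianReal (μ : ℝ) (v : NNReal) :
    ∫ x, (x - μ) ^ 2 ∂gaussianReal μ v = v := by
  simpa [variance_eq_integral measurable_id.aemeasurable, integral_id_gaussianReal]
    using variance_id_gaussianReal (μ := μ) (v := v)

/-- For every `c ∈ ℝ`, the function `s ↦ s·(Φ(−2s) − 1{s < c})` is
Lebesgue integrable on `ℝ` and `∫ s·(Φ(−2s) − 1{s < c}) ds = 1/8 − c²/2`. -/
theorem integral_s_mul_Phi_shifted_indicator (c : ℝ) :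
    Integrable (fun s : ℝ => s * (stdNormalCDF (-(2 * s)) - if s < c then 1 else 0)) ∧
    (∫ s : ℝ, s * (stdNormalCDF (-(2 * s)) - if s < c then 1 else 0))
      = 1 / 8 - c ^ 2 / 2 := by
  have hX : Measurable fun u : ℝ => -u / 2 := by fun_prop
  have hX2 : Integrable (fun u : ℝ => (-u / 2) ^ 2) (gaussianReal 0 1) := by
    convert (memLp_id_gaussianReal 2).integrable_sq.div_const 4 using 2; simp only [id]; ring
  have hsq : ∫ u, u ^ 2 ∂gaussianReal 0 1 = 1 := by
    simpa using integral_sub_sq_gaussianReal 0 1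
  have hset (s : ℝ) : {u : ℝ | s ≤ -u / 2} = Iic (-(2 * s)) := by
    ext u; simp only [mem_ofPred_eq, mem_Iic]; constructor <;> intro h <;> linarith
  have hint := integrable_mul_measureReal_le_sub_ite_lt hX hX2 c
  have heq := integral_mul_measureReal_le_sub_ite_lt hX hX2 c
  simp_rw [hset, ← stdNormalCDF_eq_measureReal_gaussianReal] at hint heq
  refine ⟨hint, heq.trans ?_⟩
  simp_rw [div_pow, neg_sq, integral_div, hsq]
  ring
end
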